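/- arXiv:2311.04656 — 2 statements merged into one kernel-verified Lean document; each statement's English description precedes it below -/
import Mathlib

section
/- For every graph H, if a finite simple graph G is H-pivot-unique, then every graph pivot-equivalent to G is H-pivot-unique. -/
/-!  Basic notions: local complementation, edge pivot, pivot-equivalence, pivot-minors. -/

variable {V : Type*} {W : Type*}

/-- Local complementation at a vertex `u`: complement the adjacency inside the
neighbourhood of `u`. -/
def localComp (G : SimpleGraph V) (u : V) : SimpleGraph V where
  Adj x y := x ≠ y ∧
    ((G.Adj u x ∧ G.Adj u y ∧ ¬ G.Adj x y) ∨ (¬ (G.Adj u x ∧ G.Adj u y) ∧ G.Adj x y))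
  symm := by
    constructor
    intro x y h
    obtain ⟨hne, h⟩ := h
    refine ⟨hne.symm, ?_⟩
    rw [G.adj_comm y x]
    tauto
  loopless := by
    constructor
    intro x h
    exact h.1 rfl

/-- The edge pivot `G ∧ uv = ((G * u) * v) * u`. -/
def pivotEdge (G : SimpleGraph V) (u v : V) : SimpleGraph V :=
  localComp (localComp (localComp G u) v) u

/-- One pivot step: pivoting along an edge of the graph. -/
def PivotStep (G G' : SimpleGraph V) : Prop :=
  ∃ u v, G.Adj u v ∧ G' = pivotEdge G u v

/-- Two graphs on the same vertex set are pivot-equivalent if one can be obtained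
from the other by a sequence of edge pivots. -/
def PivotEquiv (G G' : SimpleGraph V) : Prop :=
  Relation.ReflTransGen PivotStep G G'

/-- `H` is a pivot-minor of `G` on the vertex subset `s`: `H` is obtained (up to
isomorphism) from `G` by a sequence of edge pivots and deletions of the vertices
outside `s`.  Since pivoting an edge commutes with deleting a vertex not on that
edge, this is equivalent to performing all the edge pivots first and then deleting
the vertices outside `s`, which is how we state it. -/
def HasPivotMinorOn (G : SimpleGraph V) (s : Set V) (H : SimpleGraph W) : Prop :=
  ∃ G' : SimpleGraph V, PivotEquiv G G' ∧ Nonempty ((G'.induce s) ≃g H)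

/-- `G` contains a pivot-minor isomorphic to `H`. -/
def HasPivotMinor (G : SimpleGraph V) (H : SimpleGraph W) : Prop :=
  ∃ s : Set V, HasPivotMinorOn G s H

/-- `G'` is a result of contracting the vertex `v` in `G` (denoted `G/v`):
if `v` is isolated this is `G - v`, and otherwise it is `(G ∧ zv) - v`
for some neighbour `z` of `v` (well defined up to pivot-equivalence). -/
def IsContraction (G : SimpleGraph V) (v : V) (G' : SimpleGraph ↥{u : V | u ≠ v}) : Prop :=
  ((∀ z, ¬ G.Adj v z) ∧ G' = G.induce {u : V | u ≠ v}) ∨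
    (∃ z, G.Adj v z ∧ G' = (pivotEdge G z v).induce {u : V | u ≠ v})

/-- `G` is `H`-pivot-unique: `G` contains a pivot-minor isomorphic to `H` and for
every vertex `v`, at most one of `G - v` and `G / v` contains a pivot-minor
isomorphic to `H`. -/
def PivotUnique (G : SimpleGraph V) (H : SimpleGraph W) : Prop :=
  HasPivotMinor G H ∧
    ∀ v : V, ¬ (HasPivotMinor (G.induce {u : V | u ≠ v}) H ∧
      ∃ G' : SimpleGraph ↥{u : V | u ≠ v}, IsContraction G v G' ∧ HasPivotMinor G' H)

/-- `G` contains an induced subgraph isomorphic to `H`. -/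
def HasInducedSubgraphIso (G : SimpleGraph V) (H : SimpleGraph W) : Prop :=
  ∃ s : Set V, Nonempty ((G.induce s) ≃g H)

/-!
Over `𝔽₂`, a pivot on an edge `uv` changes the adjacency matrix by the rank-two update `aᵀb + bᵀa`
(`a`, `b` the rows of `u`, `v`) and swaps the labels `u`, `v`. This reduces two rules to ring
identities in characteristic two: `(G ∧ uv) ∧ vw = G ∧ uw` when `u` is adjacent to `v` and `w`,
and the pivots on `uv` and `zw` commute when `w` has no neighbour in `{u, v}`. The first rule makes
`G / w` well defined up to pivot-equivalence. Now compare `G` with `G ∧ uv` at a vertex `w`. For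
`w = u`, deletion and contraction trade places: `(G ∧ uv) - u = G / u`, and `(G ∧ uv) / u` is
pivot-equivalent to `G - u`. For `w ∉ {u, v}`, `(G ∧ uv) - w = (G - w) ∧ uv`, and `(G ∧ uv) / w` is
pivot-equivalent to `G / w`: by the first rule when `w` is adjacent to `u` or `v`, by the second
when `w` has other neighbours, and by the previous identity when `w` is isolated. Pivot-minors are
invariant under pivot-equivalence, so pivot-uniqueness survives every pivot.
-/

open Equiv SimpleGraph

lemma localComp_adj (G : SimpleGraph V) (u x y : V) :
    (localComp G u).Adj x y ↔ x ≠ y ∧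
      ((G.Adj u x ∧ G.Adj u y ∧ ¬ G.Adj x y) ∨ (¬ (G.Adj u x ∧ G.Adj u y) ∧ G.Adj x y)) :=
  Iff.rfl

-- Both orientations of each disequality are recorded so that `simp` can decide every `if` on
-- vertex equalities once the coincidences have been substituted away.
lemma eq_or_eq_or_ne (x a b : V) :
    a = x ∨ b = x ∨ (x ≠ a ∧ a ≠ x) ∧ (x ≠ b ∧ b ≠ x) := by
  grind

lemma eq_or_eq_or_eq_or_ne (x a b c : V) :
    a = x ∨ b = x ∨ c = x ∨ (x ≠ a ∧ a ≠ x) ∧ (x ≠ b ∧ b ≠ x) ∧ (x ≠ c ∧ c ≠ x) := by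
  grind

lemma eq_or_eq_or_eq_or_eq_or_ne (x a b c d : V) :
    a = x ∨ b = x ∨ c = x ∨ d = x ∨
      (x ≠ a ∧ a ≠ x) ∧ (x ≠ b ∧ b ≠ x) ∧ (x ≠ c ∧ c ≠ x) ∧ (x ≠ d ∧ d ≠ x) := by
  grind

section AdjMatrix

variable {α : Type*} [Zero α] [One α] {G G' : SimpleGraph V} [DecidableRel G.Adj]
  [DecidableRel G'.Adj]

lemma adjMatrix_apply_comm (x y : V) : G.adjMatrix α x y = G.adjMatrix α y x := by
  simp [adjMatrix_apply, G.adj_comm]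

lemma adjMatrix_apply_self (x : V) : G.adjMatrix α x x = 0 := by
  simp [adjMatrix_apply]

lemma adjMatrix_apply_eq_one_iff [NeZero (1 : α)] {x y : V} :
    G.adjMatrix α x y = 1 ↔ G.Adj x y := by
  simp [adjMatrix_apply]

lemma adjMatrix_apply_eq_zero_iff [NeZero (1 : α)] {x y : V} :
    G.adjMatrix α x y = 0 ↔ ¬ G.Adj x y := by
  simp [adjMatrix_apply]

lemma eq_of_adjMatrix_apply_eq [NeZero (1 : α)]
    (h : ∀ x y, G.adjMatrix α x y = G'.adjMatrix α x y) : G = G' := by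
  ext x y
  rw [← adjMatrix_apply_eq_one_iff (α := α), ← adjMatrix_apply_eq_one_iff (α := α), h]

end AdjMatrix

section PivotFormula

variable [DecidableEq V] {G : SimpleGraph V} [DecidableRel G.Adj] {u v : V}

lemma adjMatrix_localComp [DecidableRel (localComp G u).Adj] (x y : V) :
    (localComp G u).adjMatrix (ZMod 2) x y = G.adjMatrix (ZMod 2) x y +
      if x = y then 0 else G.adjMatrix (ZMod 2) u x * G.adjMatrix (ZMod 2) u y := by
  simp only [adjMatrix_apply, localComp_adj]
  split_ifs <;> simp_all [show (1 : ZMod 2) + 1 = 0 from rfl]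

lemma adjMatrix_pivotEdge (huv : G.Adj u v) [DecidableRel (pivotEdge G u v).Adj] (x y : V) :
    (pivotEdge G u v).adjMatrix (ZMod 2) x y =
      if x = u ∨ x = v ∨ y = u ∨ y = v then G.adjMatrix (ZMod 2) (swap u v x) (swap u v y)
      else G.adjMatrix (ZMod 2) x y + G.adjMatrix (ZMod 2) u x * G.adjMatrix (ZMod 2) v y +
        G.adjMatrix (ZMod 2) v x * G.adjMatrix (ZMod 2) u y := by
  classical
  have hne : u ≠ v ∧ v ≠ u := ⟨G.ne_of_adj huv, (G.ne_of_adj huv).symm⟩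
  have e := (adjMatrix_apply_eq_one_iff (α := ZMod 2)).mpr huv
  -- Make the instance classical, so that it survives unfolding `pivotEdge`.
  obtain rfl : ‹DecidableRel (pivotEdge G u v).Adj› = fun a b => Classical.propDecidable _ :=
    Subsingleton.elim _ _
  show (localComp (localComp (localComp G u) v) u).adjMatrix (ZMod 2) x y = _
  simp only [adjMatrix_localComp]
  -- Once the coincidences of `x` and `y` with `u` and `v` are fixed, both sides are polynomials in
  -- the entries of `G.adjMatrix`; orienting these entries by `adjMatrix_apply_comm` leaves an
  -- identity of commutative rings of characteristic two.
  rcases eq_or_eq_or_ne x u v with rfl | rfl | ⟨hxu, hxv⟩ <;>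
  rcases eq_or_eq_or_ne y u v with rfl | rfl | ⟨hyu, hyv⟩ <;>
  simp -failIfUnchanged only [*, swap_apply_def, ite_true, ite_false, or_true, or_false,
    or_self] <;>
  simp -failIfUnchanged only [adjMatrix_apply_comm (G := G)] <;>
  simp -failIfUnchanged only [e, adjMatrix_apply_self] <;> grind

end PivotFormula

section Pivot

variable {G : SimpleGraph V} {u v w x y z : V}

lemma localComp_localComp (G : SimpleGraph V) (u : V) : localComp (localComp G u) u = G := by
  classical
  refine eq_of_adjMatrix_apply_eq (α := ZMod 2) fun x y => ?_
  simp only [adjMatrix_localComp, adjMatrix_apply_self, zero_mul]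
  split_ifs <;> ring_nf <;> reduce_mod_char

lemma pivotEdge_pivotEdge (G : SimpleGraph V) (u v : V) : pivotEdge (pivotEdge G u v) u v = G := by
  simp only [pivotEdge, localComp_localComp]

lemma pivotEdge_comm (huv : G.Adj u v) : pivotEdge G u v = pivotEdge G v u := by
  classical
  refine eq_of_adjMatrix_apply_eq (α := ZMod 2) fun x y => ?_
  rw [adjMatrix_pivotEdge huv, adjMatrix_pivotEdge huv.symm, swap_comm]
  by_cases h : x = u ∨ x = v ∨ y = u ∨ y = v
  · rw [if_pos h, if_pos (by tauto)]
  · rw [if_neg h, if_neg (by tauto)]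
    ring

lemma pivotEdge_adj_of_adj (huv : G.Adj u v) : (pivotEdge G u v).Adj u v := by
  classical
  rw [← adjMatrix_apply_eq_one_iff (α := ZMod 2), adjMatrix_pivotEdge huv]
  simp [huv.symm]

lemma pivotEdge_adj_right (huv : G.Adj u v) (hyu : y ≠ u) (hyv : y ≠ v) :
    (pivotEdge G u v).Adj v y ↔ G.Adj u y := by
  classical
  rw [← adjMatrix_apply_eq_one_iff (α := ZMod 2), adjMatrix_pivotEdge huv,
    ← adjMatrix_apply_eq_one_iff (α := ZMod 2)]
  simp [swap_apply_of_ne_of_ne hyu hyv]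

lemma pivotEdge_adj_iff_of_not_adj (huv : G.Adj u v) (hwu : w ≠ u) (hwv : w ≠ v)
    (hu : ¬ G.Adj u w) (hv : ¬ G.Adj v w) (x : V) : (pivotEdge G u v).Adj w x ↔ G.Adj w x := by
  classical
  rw [← adjMatrix_apply_eq_one_iff (α := ZMod 2), adjMatrix_pivotEdge huv,
    ← adjMatrix_apply_eq_one_iff (α := ZMod 2), swap_apply_of_ne_of_ne hwu hwv,
    adjMatrix_apply_comm (G := G) u w, adjMatrix_apply_comm (G := G) v w,
    (adjMatrix_apply_eq_zero_iff (α := ZMod 2)).mpr (fun h => hu h.symm),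
    (adjMatrix_apply_eq_zero_iff (α := ZMod 2)).mpr (fun h => hv h.symm)]
  rcases eq_or_eq_or_ne x u v with rfl | rfl | ⟨hxu, hxv⟩
  · simp [G.adj_comm w, hu, hv]
  · simp [G.adj_comm w, hu, hv]
  · simp [hwu, hwv, hxu.1, hxv.1]

lemma pivotEdge_adj_iff_of_not_adj_of_not_adj (hzw : G.Adj z w) (hxz : x ≠ z) (hxw : x ≠ w)
    (hyz : y ≠ z) (hyw : y ≠ w) (hx : ¬ G.Adj w x) (hy : ¬ G.Adj w y) :
    (pivotEdge G z w).Adj x y ↔ G.Adj x y := by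
  classical
  rw [← adjMatrix_apply_eq_one_iff (α := ZMod 2), adjMatrix_pivotEdge hzw,
    ← adjMatrix_apply_eq_one_iff (α := ZMod 2), if_neg (by tauto),
    (adjMatrix_apply_eq_zero_iff (α := ZMod 2)).mpr hx,
    (adjMatrix_apply_eq_zero_iff (α := ZMod 2)).mpr hy]
  ring_nf

lemma pivotEdge_pivotEdge_of_adj (huv : G.Adj u v) (huw : G.Adj u w) (hvw : v ≠ w) :
    pivotEdge (pivotEdge G u v) v w = pivotEdge G u w := by
  classical
  have hne : u ≠ v ∧ v ≠ u ∧ u ≠ w ∧ w ≠ u ∧ v ≠ w ∧ w ≠ v :=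
    ⟨G.ne_of_adj huv, (G.ne_of_adj huv).symm, G.ne_of_adj huw, (G.ne_of_adj huw).symm, hvw,
      hvw.symm⟩
  have hvw' : (pivotEdge G u v).Adj v w :=
    (pivotEdge_adj_right huv (G.ne_of_adj huw).symm hvw.symm).mpr huw
  have e₁ := (adjMatrix_apply_eq_one_iff (α := ZMod 2)).mpr huv
  have e₂ := (adjMatrix_apply_eq_one_iff (α := ZMod 2)).mpr huw
  refine eq_of_adjMatrix_apply_eq (α := ZMod 2) fun x y => ?_
  simp only [adjMatrix_pivotEdge hvw', adjMatrix_pivotEdge huv, adjMatrix_pivotEdge huw]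
  rcases eq_or_eq_or_eq_or_ne x u v w with rfl | rfl | rfl | ⟨hxu, hxv, hxw⟩ <;>
  rcases eq_or_eq_or_eq_or_ne y u v w with rfl | rfl | rfl | ⟨hyu, hyv, hyw⟩ <;>
  simp -failIfUnchanged only [*, swap_apply_def, ite_true, ite_false, or_true, or_false,
    or_self] <;>
  simp -failIfUnchanged only [adjMatrix_apply_comm (G := G)] <;>
  simp -failIfUnchanged only [e₁, e₂, adjMatrix_apply_self] <;> grind

lemma pivotEdge_pivotEdge_comm (huv : G.Adj u v) (hwz : G.Adj w z) (hwu : w ≠ u) (hwv : w ≠ v)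
    (hu : ¬ G.Adj u w) (hv : ¬ G.Adj v w) :
    pivotEdge (pivotEdge G u v) z w = pivotEdge (pivotEdge G z w) u v := by
  classical
  have hzu : z ≠ u := fun h => hu (h ▸ hwz.symm)
  have hzv : z ≠ v := fun h => hv (h ▸ hwz.symm)
  have hne : u ≠ v ∧ v ≠ u ∧ w ≠ z ∧ z ≠ w ∧ u ≠ z ∧ v ≠ z ∧ u ≠ w ∧ v ≠ w :=
    ⟨G.ne_of_adj huv, (G.ne_of_adj huv).symm, G.ne_of_adj hwz, (G.ne_of_adj hwz).symm,
      hzu.symm, hzv.symm, hwu.symm, hwv.symm⟩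
  have hzw : (pivotEdge G u v).Adj z w :=
    ((pivotEdge_adj_iff_of_not_adj huv hwu hwv hu hv z).mpr hwz).symm
  have huv' : (pivotEdge G z w).Adj u v :=
    (pivotEdge_adj_iff_of_not_adj_of_not_adj hwz.symm hzu.symm hwu.symm hzv.symm hwv.symm
      (fun h => hu h.symm) (fun h => hv h.symm)).mpr huv
  have e₁ := (adjMatrix_apply_eq_one_iff (α := ZMod 2)).mpr huv
  have e₂ := (adjMatrix_apply_eq_one_iff (α := ZMod 2)).mpr hwz
  have e₃ := (adjMatrix_apply_eq_zero_iff (α := ZMod 2)).mpr hu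
  have e₄ := (adjMatrix_apply_eq_zero_iff (α := ZMod 2)).mpr hv
  refine eq_of_adjMatrix_apply_eq (α := ZMod 2) fun x y => ?_
  simp only [adjMatrix_pivotEdge hzw, adjMatrix_pivotEdge huv', adjMatrix_pivotEdge huv,
    adjMatrix_pivotEdge hwz.symm]
  rcases eq_or_eq_or_eq_or_eq_or_ne x u v z w with rfl | rfl | rfl | rfl | ⟨hxu, hxv, hxz, hxw⟩ <;>
  rcases eq_or_eq_or_eq_or_eq_or_ne y u v z w with rfl | rfl | rfl | rfl | ⟨hyu, hyv, hyz, hyw⟩ <;>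
  simp -failIfUnchanged only [*, swap_apply_def, ite_true, ite_false, or_true, or_false,
    or_self] <;>
  simp -failIfUnchanged only [adjMatrix_apply_comm (G := G)] <;>
  simp -failIfUnchanged only [e₃, e₄] <;> grind

end Pivot

section PivotMinor

variable {G G' : SimpleGraph V} {H : SimpleGraph W} {u v w : V}

lemma induce_localComp {s : Set V} (hu : u ∈ s) :
    (localComp G u).induce s = localComp (G.induce s) ⟨u, hu⟩ := by
  ext ⟨a, ha⟩ ⟨b, hb⟩
  simp only [comap_adj, Function.Embedding.coe_subtype, localComp_adj, Subtype.mk.injEq, ne_eq]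

lemma induce_pivotEdge {s : Set V} (hu : u ∈ s) (hv : v ∈ s) :
    (pivotEdge G u v).induce s = pivotEdge (G.induce s) ⟨u, hu⟩ ⟨v, hv⟩ := by
  simp only [pivotEdge, induce_localComp hu, induce_localComp hv]

lemma PivotStep.symm (h : PivotStep G G') : PivotStep G' G := by
  obtain ⟨u, v, huv, rfl⟩ := h
  exact ⟨u, v, pivotEdge_adj_of_adj huv, (pivotEdge_pivotEdge G u v).symm⟩

lemma PivotEquiv.symm (h : PivotEquiv G G') : PivotEquiv G' G := by
  induction h with
  | refl => exact .refl
  | tail _ hs ih => exact .head hs.symm ih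

lemma PivotEquiv.hasPivotMinor (h : PivotEquiv G G') (hG : HasPivotMinor G H) :
    HasPivotMinor G' H := by
  obtain ⟨s, K, hK, hiso⟩ := hG
  exact ⟨s, K, h.symm.trans hK, hiso⟩

lemma pivotStep_induce_pivotEdge (huv : G.Adj u v) (hwu : w ≠ u) (hwv : w ≠ v) :
    PivotStep (G.induce {t | t ≠ w}) ((pivotEdge G u v).induce {t | t ≠ w}) :=
  ⟨⟨u, hwu.symm⟩, ⟨v, hwv.symm⟩, huv, induce_pivotEdge _ _⟩

lemma IsContraction.pivotEquiv {C C' : SimpleGraph ↥{t : V | t ≠ w}} (hC : IsContraction G w C)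
    (hC' : IsContraction G w C') : PivotEquiv C C' := by
  rcases hC with ⟨hiso, rfl⟩ | ⟨z, hz, rfl⟩ <;> rcases hC' with ⟨hiso', rfl⟩ | ⟨z', hz', rfl⟩
  · exact .refl
  · exact absurd hz' (hiso z')
  · exact absurd hz (hiso' z)
  rcases eq_or_ne z z' with rfl | hzz'
  · exact .refl
  have hz'w : z' ≠ w := (G.ne_of_adj hz').symm
  have hzz'_adj : (pivotEdge G z w).Adj z z' := by
    rw [pivotEdge_comm hz.symm]
    exact (pivotEdge_adj_right hz hz'w hzz'.symm).mpr hz'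
  have hpivot : pivotEdge (pivotEdge G z w) z z' = pivotEdge G z' w := by
    rw [pivotEdge_comm hz.symm, pivotEdge_pivotEdge_of_adj hz hz' hzz', pivotEdge_comm hz']
  refine .single ⟨⟨z, (G.ne_of_adj hz).symm⟩, ⟨z', hz'w⟩, hzz'_adj, ?_⟩
  rw [← induce_pivotEdge, hpivot]

lemma IsContraction.hasPivotMinor {C C' : SimpleGraph ↥{t : V | t ≠ w}}
    (hC : IsContraction G w C) (hC' : IsContraction G w C') (h : HasPivotMinor C H) :
    HasPivotMinor C' H :=
  (hC.pivotEquiv hC').hasPivotMinor h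

lemma isContraction_induce_pivotEdge (huv : G.Adj u v) :
    IsContraction G u ((pivotEdge G u v).induce {t | t ≠ u}) :=
  Or.inr ⟨v, huv, by rw [pivotEdge_comm huv]⟩

lemma isContraction_pivotEdge_of_adj (huv : G.Adj u v) (huw : G.Adj u w) (hwv : w ≠ v) :
    IsContraction (pivotEdge G u v) w ((pivotEdge G u w).induce {t | t ≠ w}) := by
  have hvw : (pivotEdge G u v).Adj v w :=
    (pivotEdge_adj_right huv (G.ne_of_adj huw).symm hwv).mpr huw
  exact Or.inr ⟨v, hvw.symm, by rw [pivotEdge_pivotEdge_of_adj huv huw hwv.symm]⟩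

lemma exists_isContraction_pivotStep {C : SimpleGraph ↥{t : V | t ≠ w}} (huv : G.Adj u v)
    (hwu : w ≠ u) (hwv : w ≠ v) (hu : ¬ G.Adj u w) (hv : ¬ G.Adj v w)
    (hC : IsContraction (pivotEdge G u v) w C) :
    ∃ C', IsContraction G w C' ∧ PivotStep C' C := by
  have hN := pivotEdge_adj_iff_of_not_adj huv hwu hwv hu hv
  rcases hC with ⟨hiso, rfl⟩ | ⟨z, hz, rfl⟩
  · exact ⟨_, Or.inl ⟨fun t => (hN t).not.mp (hiso t), rfl⟩,
      pivotStep_induce_pivotEdge huv hwu hwv⟩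
  have hwz := (hN z).mp hz
  have hzu : z ≠ u := fun h => hu (h ▸ hwz.symm)
  have hzv : z ≠ v := fun h => hv (h ▸ hwz.symm)
  have huv' : (pivotEdge G z w).Adj u v :=
    (pivotEdge_adj_iff_of_not_adj_of_not_adj hwz.symm hzu.symm hwu.symm hzv.symm hwv.symm
      (fun h => hu h.symm) (fun h => hv h.symm)).mpr huv
  refine ⟨_, Or.inr ⟨z, hwz, rfl⟩, ?_⟩
  rw [pivotEdge_pivotEdge_comm huv hwz hwu hwv hu hv]
  exact pivotStep_induce_pivotEdge huv' hwu hwv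

def DeletionAndContractionHavePivotMinor (G : SimpleGraph V) (w : V) (H : SimpleGraph W) : Prop :=
  HasPivotMinor (G.induce {t | t ≠ w}) H ∧
    ∃ C : SimpleGraph ↥{t : V | t ≠ w}, IsContraction G w C ∧ HasPivotMinor C H

lemma DeletionAndContractionHavePivotMinor.of_pivotEdge_left (huv : G.Adj u v)
    (h : DeletionAndContractionHavePivotMinor (pivotEdge G u v) u H) :
    DeletionAndContractionHavePivotMinor G u H := by
  obtain ⟨hdel, C, hC, hCH⟩ := h
  have hG : IsContraction (pivotEdge G u v) u (G.induce {t | t ≠ u}) := by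
    simpa only [pivotEdge_pivotEdge] using
      isContraction_induce_pivotEdge (pivotEdge_adj_of_adj huv)
  exact ⟨hC.hasPivotMinor hG hCH, _, isContraction_induce_pivotEdge huv, hdel⟩

lemma DeletionAndContractionHavePivotMinor.of_pivotEdge (huv : G.Adj u v) (hwu : w ≠ u)
    (hwv : w ≠ v) (h : DeletionAndContractionHavePivotMinor (pivotEdge G u v) w H) :
    DeletionAndContractionHavePivotMinor G w H := by
  obtain ⟨hdel, C, hC, hCH⟩ := h
  refine ⟨PivotEquiv.hasPivotMinor (.single (pivotStep_induce_pivotEdge huv hwu hwv).symm) hdel,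
    ?_⟩
  by_cases hu : G.Adj u w
  · exact ⟨_, Or.inr ⟨u, hu.symm, rfl⟩,
      hC.hasPivotMinor (isContraction_pivotEdge_of_adj huv hu hwv) hCH⟩
  by_cases hv : G.Adj v w
  · rw [pivotEdge_comm huv] at hC
    exact ⟨_, Or.inr ⟨v, hv.symm, rfl⟩,
      hC.hasPivotMinor (isContraction_pivotEdge_of_adj huv.symm hv hwu) hCH⟩
  obtain ⟨C', hC', hstep⟩ := exists_isContraction_pivotStep huv hwu hwv hu hv hC
  exact ⟨C', hC', PivotEquiv.hasPivotMinor (.single hstep.symm) hCH⟩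

lemma PivotUnique.pivotStep (h : PivotUnique G H) (hG : PivotStep G G') : PivotUnique G' H := by
  obtain ⟨u, v, huv, rfl⟩ := hG
  refine ⟨PivotEquiv.hasPivotMinor (.single ⟨u, v, huv, rfl⟩) h.1, fun w hw => ?_⟩
  rcases eq_or_ne w u with rfl | hwu
  · exact h.2 w (DeletionAndContractionHavePivotMinor.of_pivotEdge_left huv hw)
  rcases eq_or_ne w v with rfl | hwv
  · rw [pivotEdge_comm huv] at hw
    exact h.2 w (DeletionAndContractionHavePivotMinor.of_pivotEdge_left huv.symm hw)
  exact h.2 w (DeletionAndContractionHavePivotMinor.of_pivotEdge huv hwu hwv hw)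

end PivotMinor

theorem pivotUnique_of_pivotEquiv_general {V : Type*} {W : Type*}
    (G G' : SimpleGraph V) (H : SimpleGraph W)
    (h : PivotUnique G H) (he : PivotEquiv G G') :
    PivotUnique G' H := by
  induction he with
  | refl => exact h
  | tail _ hstep ih => exact ih.pivotStep hstep

/-- For every graph `H`, if `G` is `H`-pivot-unique, then every
graph pivot-equivalent to `G` is `H`-pivot-unique. -/
theorem pivotUnique_of_pivotEquiv {V : Type*} {W : Type*} [Fintype V] [Fintype W]
    (G G' : SimpleGraph V) (H : SimpleGraph W)
    (h : PivotUnique G H) (he : PivotEquiv G G') :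
    PivotUnique G' H :=
  pivotUnique_of_pivotEquiv_general G G' H h he
end

section
/- A finite simple graph G has no induced subgraph isomorphic to the bull, the claw K_{1,3}, or P₅ if and only if every connected component of G contains no independent set of size 3 (equivalently, every component has no induced subgraph isomorphic to 3P₁). -/
/-!  Basic notions: local complementation, edge pivot, pivot-equivalence, pivot-minors. -/

variable {V : Type*} {W : Type*}

/-- The bull: the triangle `{0,1,2}` with pendant vertices `3` attached to `0`
and `4` attached to `1`. -/
def bull : SimpleGraph (Fin 5) :=
  SimpleGraph.fromRel (fun x y =>
    (x.val = 0 ∧ y.val = 1) ∨ (x.val = 0 ∧ y.val = 2) ∨ (x.val = 1 ∧ y.val = 2) ∨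
    (x.val = 0 ∧ y.val = 3) ∨ (x.val = 1 ∧ y.val = 4))

/-- The claw `K_{1,3}`: centre `0` adjacent to the three leaves `1, 2, 3`. -/
def claw : SimpleGraph (Fin 4) :=
  SimpleGraph.fromRel (fun x _ => x.val = 0)

/-! Bull, claw and `P₅` are connected and contain three pairwise non-adjacent vertices, so an
induced copy of one of them puts a `3P₁` inside a single component.

Conversely, let `a, b, c` be pairwise non-adjacent vertices of one component of a
{bull, claw, `P₅`}-free graph. A shortest `a`–`b` path is chordless, and from it one finds such
a triple in which two of the vertices have a common neighbour `p`. Then `p ≁ c` (else a claw), and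
a path from `c` to `p` has a first edge `rq` entering the closed neighbourhood of `a – p – b`;
the neighbours of `q` on `a – p – b` then produce a claw, a bull or a `P₅`. -/

open SimpleGraph Function

variable {G : SimpleGraph V} {H : SimpleGraph W}

theorem hasInducedSubgraphIso_iff :
    HasInducedSubgraphIso G H ↔ Nonempty (H ↪g G) :=
  ⟨fun ⟨s, ⟨e⟩⟩ ↦ ⟨e.symm.toEmbedding.trans (Embedding.induce s)⟩,
    fun ⟨f⟩ ↦ ⟨Set.range f, ⟨f.isoInduceRange.symm⟩⟩⟩

theorem hasInducedSubgraphIso_of_injective (f : W → V) (hf : Injective f)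
    (hadj : ∀ i j, G.Adj (f i) (f j) ↔ H.Adj i j) :
    HasInducedSubgraphIso G H :=
  hasInducedSubgraphIso_iff.2 ⟨⟨⟨f, hf⟩, hadj _ _⟩⟩

theorem HasInducedSubgraphIso.trans {U : Type*} {K : SimpleGraph U}
    (hGH : HasInducedSubgraphIso G H) (hHK : HasInducedSubgraphIso H K) :
    HasInducedSubgraphIso G K := by
  obtain ⟨f⟩ := hasInducedSubgraphIso_iff.1 hGH
  obtain ⟨g⟩ := hasInducedSubgraphIso_iff.1 hHK
  exact hasInducedSubgraphIso_iff.2 ⟨g.trans f⟩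

theorem hasInducedSubgraphIso_bot_three {a b c : V} (hab : ¬ G.Adj a b)
    (hac : ¬ G.Adj a c) (hbc : ¬ G.Adj b c) (hab' : a ≠ b) (hac' : a ≠ c) (hbc' : b ≠ c) :
    HasInducedSubgraphIso G (⊥ : SimpleGraph (Fin 3)) := by
  refine hasInducedSubgraphIso_of_injective ![a, b, c] ?_ fun i j ↦ ?_
  · intro i j hij
    fin_cases i <;> fin_cases j <;> simp at hij ⊢ <;> grind
  · fin_cases i <;> fin_cases j <;> simp_all [G.adj_comm]

theorem claw_eq_starGraph : claw = starGraph 0 := by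
  simp only [claw, starGraph, Fin.val_eq_zero_iff]

theorem connected_claw : claw.Connected :=
  claw_eq_starGraph ▸ connected_starGraph 0

theorem connected_bull : bull.Connected := by
  have h01 : bull.Adj 0 1 := by simp [bull]
  have h02 : bull.Adj 0 2 := by simp [bull]
  have h03 : bull.Adj 0 3 := by simp [bull]
  have h14 : bull.Adj 1 4 := by simp [bull]
  refine (connected_iff_exists_forall_reachable _).2 ⟨0, fun v ↦ ?_⟩
  fin_cases v
  exacts [.rfl, h01.reachable, h02.reachable, h03.reachable, h01.reachable.trans h14.reachable]

theorem bull_hasInducedSubgraphIso_bot_three :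
    HasInducedSubgraphIso bull (⊥ : SimpleGraph (Fin 3)) :=
  hasInducedSubgraphIso_bot_three (a := 2) (b := 3) (c := 4) (by simp [bull]) (by simp [bull])
    (by simp [bull]) (by decide) (by decide) (by decide)

theorem claw_hasInducedSubgraphIso_bot_three :
    HasInducedSubgraphIso claw (⊥ : SimpleGraph (Fin 3)) :=
  hasInducedSubgraphIso_bot_three (a := 1) (b := 2) (c := 3) (by simp [claw]) (by simp [claw])
    (by simp [claw]) (by decide) (by decide) (by decide)

theorem pathGraph_five_hasInducedSubgraphIso_bot_three :
    HasInducedSubgraphIso (pathGraph 5) (⊥ : SimpleGraph (Fin 3)) :=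
  hasInducedSubgraphIso_bot_three (a := 0) (b := 2) (c := 4) (by simp [pathGraph_adj])
    (by simp [pathGraph_adj]) (by simp [pathGraph_adj]) (by decide) (by decide) (by decide)

theorem hasInducedSubgraphIso_claw {x a b c : V} (hxa : G.Adj x a) (hxb : G.Adj x b)
    (hxc : G.Adj x c) (hab : ¬ G.Adj a b) (hac : ¬ G.Adj a c) (hbc : ¬ G.Adj b c)
    (hab' : a ≠ b) (hac' : a ≠ c) (hbc' : b ≠ c) :
    HasInducedSubgraphIso G claw := by
  refine hasInducedSubgraphIso_of_injective ![x, a, b, c] ?_ fun i j ↦ ?_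
  · intro i j hij
    fin_cases i <;> fin_cases j <;> simp at hij ⊢ <;> grind [G.ne_of_adj]
  · rw [claw_eq_starGraph]
    fin_cases i <;> fin_cases j <;> simp_all [G.adj_comm]

theorem hasInducedSubgraphIso_bull {x y z s t : V} (hxy : G.Adj x y) (hxz : G.Adj x z)
    (hyz : G.Adj y z) (hxs : G.Adj x s) (hyt : G.Adj y t) (hys : ¬ G.Adj y s)
    (hzs : ¬ G.Adj z s) (hxt : ¬ G.Adj x t) (hzt : ¬ G.Adj z t) (hst : ¬ G.Adj s t) :
    HasInducedSubgraphIso G bull := by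
  refine hasInducedSubgraphIso_of_injective ![x, y, z, s, t] ?_ fun i j ↦ ?_
  · intro i j hij
    fin_cases i <;> fin_cases j <;> simp at hij ⊢ <;> grind [G.ne_of_adj, G.adj_symm]
  · fin_cases i <;> fin_cases j <;> simp_all [bull, G.adj_comm]

theorem hasInducedSubgraphIso_pathGraph_five {v₀ v₁ v₂ v₃ v₄ : V} (h₀₁ : G.Adj v₀ v₁)
    (h₁₂ : G.Adj v₁ v₂) (h₂₃ : G.Adj v₂ v₃) (h₃₄ : G.Adj v₃ v₄) (h₀₂ : ¬ G.Adj v₀ v₂)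
    (h₀₃ : ¬ G.Adj v₀ v₃) (h₀₄ : ¬ G.Adj v₀ v₄) (h₁₃ : ¬ G.Adj v₁ v₃) (h₁₄ : ¬ G.Adj v₁ v₄)
    (h₂₄ : ¬ G.Adj v₂ v₄) :
    HasInducedSubgraphIso G (pathGraph 5) := by
  refine hasInducedSubgraphIso_of_injective ![v₀, v₁, v₂, v₃, v₄] ?_ fun i j ↦ ?_
  · intro i j hij
    fin_cases i <;> fin_cases j <;> simp at hij ⊢ <;> grind [G.ne_of_adj, G.adj_symm]
  · fin_cases i <;> fin_cases j <;> simp_all [pathGraph_adj, G.adj_comm]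

namespace SimpleGraph

/-- The vertices `v 0, …, v n` form an induced path of `G`; the values of `v` beyond `n` play
no role. -/
structure IsInducedPath (G : SimpleGraph V) (v : ℕ → V) (n : ℕ) : Prop where
  adj : ∀ i < n, G.Adj (v i) (v (i + 1))
  not_adj : ∀ i j, i + 2 ≤ j → j ≤ n → ¬ G.Adj (v i) (v j)
  ne : ∀ i j, i < j → j ≤ n → v i ≠ v j

theorem Walk.dist_getVert_getVert {u v : V} {w : G.Walk u v} (hw : w.length = G.dist u v)
    {i j : ℕ} (hij : i ≤ j) (hj : j ≤ w.length) :
    G.dist (w.getVert i) (w.getVert j) = j - i := by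
  have h := length_eq_dist_of_subwalk hw
    ((w.take j).isSubwalk_drop i |>.trans (w.isSubwalk_take j))
  simpa [take_length, drop_length, take_getVert, min_eq_left hj, min_eq_right hij] using h.symm

theorem Walk.isInducedPath_getVert {u v : V} {w : G.Walk u v} (hw : w.length = G.dist u v) :
    G.IsInducedPath w.getVert w.length where
  adj _ := w.adj_getVert_succ
  not_adj i j hij hj h := by
    have := w.dist_getVert_getVert hw (by omega : i ≤ j) hj
    rw [dist_eq_one_iff_adj.2 h] at this
    omega
  ne i j hij hj h := by
    have := w.dist_getVert_getVert hw hij.le hj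
    rw [h, dist_self] at this
    omega

theorem Reachable.exists_isInducedPath {u v : V} (h : G.Reachable u v) :
    ∃ n f, G.IsInducedPath f n ∧ f 0 = u ∧ f n = v := by
  obtain ⟨w, hw⟩ := h.exists_walk_length_eq_dist
  exact ⟨_, _, Walk.isInducedPath_getVert hw, w.getVert_zero, w.getVert_length⟩

theorem Connected.exists_hasInducedSubgraphIso_induce_supp (hH : H.Connected)
    (hGH : HasInducedSubgraphIso G H) :
    ∃ C : G.ConnectedComponent, HasInducedSubgraphIso (G.induce C.supp) H := by
  obtain ⟨f⟩ := hasInducedSubgraphIso_iff.1 hGH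
  obtain ⟨w⟩ := hH.nonempty
  have hrange : Set.range f ⊆ (G.connectedComponentMk (f w)).supp := by
    rintro _ ⟨v, rfl⟩
    exact ConnectedComponent.sound ((hH w v).map f.toHom).symm
  exact ⟨_, hasInducedSubgraphIso_iff.2
    ⟨f.isoInduceRange.toEmbedding.trans (G.induceHomOfLE hrange)⟩⟩

end SimpleGraph

structure IsBullClawP5Free (G : SimpleGraph V) : Prop where
  not_bull : ¬ HasInducedSubgraphIso G bull
  not_claw : ¬ HasInducedSubgraphIso G claw
  not_pathGraph_five : ¬ HasInducedSubgraphIso G (pathGraph 5)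

namespace IsBullClawP5Free

variable {a b c p : V}

theorem adj_of_adj_of_pendant {q r : V} (hG : IsBullClawP5Free G) (hap : G.Adj a p)
    (hpb : G.Adj p b) (hab : ¬ G.Adj a b) (hqr : G.Adj q r) (hra : ¬ G.Adj r a)
    (hrp : ¬ G.Adj r p) (hrb : ¬ G.Adj r b) (hqa : G.Adj q a) : G.Adj q b := by
  by_contra hqb
  by_cases hqp : G.Adj q p
  · exact hG.not_bull (hasInducedSubgraphIso_bull hqp.symm hap.symm hqa hpb hqr hqb hab
      (fun h ↦ hrp h.symm) (fun h ↦ hra h.symm) (fun h ↦ hrb h.symm))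
  · exact hG.not_pathGraph_five
      (hasInducedSubgraphIso_pathGraph_five hqr.symm hqa hap hpb hra hrp hrb hqp hqb hab)

theorem not_reachable_of_adj_of_adj (hG : IsBullClawP5Free G) (hap : G.Adj a p) (hpb : G.Adj p b)
    (hab : ¬ G.Adj a b) (hac : ¬ G.Adj a c) (hbc : ¬ G.Adj b c) (hab' : a ≠ b) (hac' : a ≠ c)
    (hbc' : b ≠ c) : ¬ G.Reachable p c := by
  rintro ⟨w⟩
  have hpc : ¬ G.Adj p c := fun h ↦
    hG.not_claw (hasInducedSubgraphIso_claw hap.symm hpb h hab hac hbc hab' hac' hbc')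
  set N : Set V := {x | x = a ∨ x = p ∨ x = b ∨ G.Adj x a ∨ G.Adj x p ∨ G.Adj x b}
  have hcN : c ∉ N := by
    rintro (rfl | rfl | rfl | h | h | h)
    exacts [hac' rfl, hac hap, hbc' rfl, hac h.symm, hpc h.symm, hbc h.symm]
  obtain ⟨⟨⟨r, q⟩, hrq⟩, -, hr, hq⟩ := w.reverse.exists_boundary_dart Nᶜ hcN (by simp [N])
  simp only [Set.mem_compl_iff, N, Set.mem_ofPred_eq, not_or] at hr hq
  obtain ⟨hra', -, hrb', hra, hrp, hrb⟩ := hr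
  have hqa' : a ≠ q := by rintro rfl; exact hra hrq
  have hqb' : b ≠ q := by rintro rfl; exact hrb hrq
  have hq_pendant : G.Adj q a ↔ G.Adj q b :=
    ⟨hG.adj_of_adj_of_pendant hap hpb hab hrq.symm hra hrp hrb,
      hG.adj_of_adj_of_pendant hpb.symm hap.symm (fun h ↦ hab h.symm) hrq.symm hrb hrp hra⟩
  by_cases hqa : G.Adj q a
  · exact hG.not_claw (hasInducedSubgraphIso_claw hqa (hq_pendant.1 hqa) hrq.symm hab
      (fun h ↦ hra h.symm) (fun h ↦ hrb h.symm) hab' (Ne.symm hra') (Ne.symm hrb'))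
  · have hqp : G.Adj q p := by grind
    exact hG.not_claw (hasInducedSubgraphIso_claw hap.symm hpb hqp.symm hab
      (fun h ↦ hqa h.symm) (fun h ↦ hq_pendant.not.1 hqa h.symm) hab' hqa' hqb')

theorem not_reachable_of_indep (hG : IsBullClawP5Free G) (hab : ¬ G.Adj a b)
    (hac : ¬ G.Adj a c) (hbc : ¬ G.Adj b c) (hab' : a ≠ b) (hac' : a ≠ c) (hbc' : b ≠ c)
    (hreach : G.Reachable a b) : ¬ G.Reachable a c := by
  intro hac_reach
  obtain ⟨n, v, hv, rfl, rfl⟩ := hreach.exists_isInducedPath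
  have hn₀ : n ≠ 0 := by rintro rfl; exact hab' rfl
  have hn₁ : n ≠ 1 := by rintro rfl; exact hab (hv.adj 0 one_pos)
  have hreach₁ : G.Reachable (v 1) c := (hv.adj 0 (by omega)).reachable.symm.trans hac_reach
  obtain rfl | rfl | hn : n = 2 ∨ n = 3 ∨ 4 ≤ n := by omega
  · exact hG.not_reachable_of_adj_of_adj (hv.adj 0 (by omega)) (hv.adj 1 (by omega)) hab hac hbc
      hab' hac' hbc' hreach₁
  · have h₀₁ := hv.adj 0 (by omega)
    have h₁₂ := hv.adj 1 (by omega)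
    have h₂₃ := hv.adj 2 (by omega)
    have h₀₂ := hv.not_adj 0 2 (by omega) (by omega)
    have h₁₃ := hv.not_adj 1 3 (by omega) (by omega)
    by_cases hc₁ : G.Adj c (v 1)
    · by_cases hc₂ : G.Adj c (v 2)
      · exact hG.not_bull (hasInducedSubgraphIso_bull h₁₂ hc₁.symm hc₂.symm h₀₁.symm h₂₃
          (fun h ↦ h₀₂ h.symm) (fun h ↦ hac h.symm) h₁₃ (fun h ↦ hbc h.symm) hab)
      · exact hG.not_reachable_of_adj_of_adj h₀₁ h₁₂ h₀₂ hac (fun h ↦ hc₂ h.symm)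
          (hv.ne 0 2 (by omega) (by omega)) hac' (by rintro rfl; exact hbc h₂₃.symm) hreach₁
    · exact hG.not_reachable_of_adj_of_adj h₁₂ h₂₃ h₁₃ (fun h ↦ hc₁ h.symm) hbc
        (hv.ne 1 3 (by omega) (by omega)) (by rintro rfl; exact hac h₀₁) hbc'
        (h₁₂.reachable.symm.trans hreach₁)
  · -- `v 0, v 2, v 4` are pairwise non-adjacent, and `v 1` is a common neighbour of `v 0, v 2`.
    exact hG.not_reachable_of_adj_of_adj (hv.adj 0 (by omega)) (hv.adj 1 (by omega))
      (hv.not_adj 0 2 (by omega) (by omega)) (hv.not_adj 0 4 (by omega) (by omega))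
      (hv.not_adj 2 4 (by omega) (by omega)) (hv.ne 0 2 (by omega) (by omega))
      (hv.ne 0 4 (by omega) (by omega)) (hv.ne 2 4 (by omega) (by omega))
      ((hv.adj 1 (by omega)).reachable.trans <|
        (hv.adj 2 (by omega)).reachable.trans (hv.adj 3 (by omega)).reachable)

end IsBullClawP5Free

theorem bullClawP5_free_iff_general {V : Type*} (G : SimpleGraph V) :
    (¬ HasInducedSubgraphIso G bull ∧ ¬ HasInducedSubgraphIso G claw ∧
      ¬ HasInducedSubgraphIso G (SimpleGraph.pathGraph 5)) ↔
    ∀ c : G.ConnectedComponent,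
      ¬ HasInducedSubgraphIso (G.induce c.supp) (⊥ : SimpleGraph (Fin 3)) := by
  constructor
  · rintro ⟨hbull, hclaw, hP5⟩ C hC
    obtain ⟨f⟩ := hasInducedSubgraphIso_iff.1 hC
    let g : (⊥ : SimpleGraph (Fin 3)) ↪g G := f.trans (Embedding.induce C.supp)
    have hne (i j : Fin 3) (hij : i ≠ j) : g i ≠ g j := g.injective.ne hij
    have hnadj (i j : Fin 3) : ¬ G.Adj (g i) (g j) := fun h ↦ by simpa using g.map_adj_iff.1 h
    have hreach (i j : Fin 3) : G.Reachable (g i) (g j) :=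
      C.reachable_of_mem_supp (f i).2 (f j).2
    exact IsBullClawP5Free.not_reachable_of_indep ⟨hbull, hclaw, hP5⟩ (hnadj 0 1) (hnadj 0 2)
      (hnadj 1 2) (hne 0 1 (by decide)) (hne 0 2 (by decide)) (hne 1 2 (by decide))
      (hreach 0 1) (hreach 0 2)
  · intro hG
    have free {U : Type} {H : SimpleGraph U} (hH : H.Connected)
        (h3 : HasInducedSubgraphIso H (⊥ : SimpleGraph (Fin 3))) :
        ¬ HasInducedSubgraphIso G H := fun hGH ↦ by
      obtain ⟨C, hC⟩ := hH.exists_hasInducedSubgraphIso_induce_supp hGH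
      exact hG C (hC.trans h3)
    exact ⟨free connected_bull bull_hasInducedSubgraphIso_bot_three,
      free connected_claw claw_hasInducedSubgraphIso_bot_three,
      free (pathGraph_connected 4) pathGraph_five_hasInducedSubgraphIso_bot_three⟩

/-- A finite simple graph `G` has no induced subgraph isomorphic
to the bull, the claw `K_{1,3}`, or `P₅` if and only if every connected component of
`G` has no induced subgraph isomorphic to `3P₁` (no independent set of size three). -/
theorem bullClawP5_free_iff {V : Type*} [Fintype V] (G : SimpleGraph V) :
    (¬ HasInducedSubgraphIso G bull ∧ ¬ HasInducedSubgraphIso G claw ∧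
      ¬ HasInducedSubgraphIso G (SimpleGraph.pathGraph 5)) ↔
    ∀ c : G.ConnectedComponent,
      ¬ HasInducedSubgraphIso (G.induce c.supp) (⊥ : SimpleGraph (Fin 3)) :=
  bullClawP5_free_iff_general G
end
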